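/- arXiv:1205.0240 — 2 statements merged into one kernel-verified Lean document; each statement's English description precedes it below -/
import Mathlib

section
/- Let V be a real vector space with non-degenerate symmetric bilinear form, and let J₁, J₂ be commuting orthogonal complex structures on V (Jᵢ² = -1, ⟨Jᵢa, Jᵢb⟩ = ⟨a,b⟩, J₁J₂ = J₂J₁) such that G = -J₁J₂ satisfies G² = 1 and ⟨Ga, b⟩ is positive definite. Let L₁, L₂ ⊆ V⊗ℂ be the +i eigenspaces of J₁, J₂. Then V⊗ℂ = L₁⁺ ⊕ L₁⁻ ⊕ conj(L₁⁺) ⊕ conj(L₁⁻) where L₁⁺ = L₁ ∩ L₂ and L₁⁻ = L₁ ∩ conj(L₂); moreover L₁ = L₁⁺ ⊕ L₁⁻, L₂ = L₁⁺ ⊕ conj(L₁⁻), the +1 eigenspace of G complexifies to L₁⁺ ⊕ conj(L₁⁺), and the -1 eigenspace to L₁⁻ ⊕ conj(L₁⁻). -/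
/-!
Over `ℂ`, a complex structure `C` (`C² = -1`) splits every `C`-invariant subspace into its
`±i` eigenparts via the projections `(1 ∓ i C)/2`. Since `J₁` and `J₂` commute, each
preserves the eigenspaces of the other, so splitting the eigenspaces of `J₁` along `J₂` gives
the four-fold decomposition. On the simultaneous eigenspace `J₁ = μ, J₂ = ν` the operator
`G = -J₁J₂` acts by `-μν`, which identifies the `±1` eigenspaces of `G`. Independence follows
by viewing the four pieces inside eigenspaces of `J₁ + 2J₂` with the distinct eigenvalues
`3i, -i, -3i, i`.
-/

open Module Module.End Complex

section SimultaneousEigenspaces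

variable {K M : Type*} [Field K] [AddCommGroup M] [Module K M]

lemma inf_eigenspace_le_eigenspace_add_smul (A C : End K M) (μ ν t : K) :
    eigenspace A μ ⊓ eigenspace C ν ≤ eigenspace (A + t • C) (μ + t * ν) := by
  intro x hx
  rw [Submodule.mem_inf, mem_eigenspace_iff, mem_eigenspace_iff] at hx
  rw [mem_eigenspace_iff, LinearMap.add_apply, LinearMap.smul_apply, hx.1, hx.2,
    smul_smul, add_smul]

lemma iSupIndep_inf_eigenspace {ι : Type*} (A C : End K M) (μ ν : ι → K) (t : K)
    (hinj : Function.Injective fun i ↦ μ i + t * ν i) :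
    iSupIndep fun i ↦ eigenspace A (μ i) ⊓ eigenspace C (ν i) :=
  ((eigenspaces_iSupIndep (A + t • C)).comp hinj).mono fun i ↦
    inf_eigenspace_le_eigenspace_add_smul A C (μ i) (ν i) t

lemma eigenspace_neg_mul_inf_eigenspace {A C : End K M} (hAC : Commute A C) {μ ν l : K}
    (hμ : μ ≠ 0) (h : μ * ν = -l) :
    eigenspace (-(A * C)) l ⊓ eigenspace A μ = eigenspace A μ ⊓ eigenspace C ν := by
  ext x
  rw [inf_comm (eigenspace A μ)]
  simp only [Submodule.mem_inf, mem_eigenspace_iff, and_congr_left_iff]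
  intro hx
  have hGx : (-(A * C)) x = -(μ • C x) := by
    rw [LinearMap.neg_apply, hAC.eq, Module.End.mul_apply, hx, map_smul]
  rw [hGx, neg_eq_iff_eq_neg, ← neg_smul, ← h, ← smul_smul]
  exact (smul_right_injective M hμ).eq_iff

end SimultaneousEigenspaces

section ComplexStructure

variable {W : Type*} [AddCommGroup W] [Module ℂ W] {C : End ℂ W}

lemma inf_eigenspace_I_sup_inf_eigenspace_neg_I (hC : C * C = -1) {p : Submodule ℂ W}
    (hp : Set.MapsTo C p p) : p ⊓ eigenspace C I ⊔ p ⊓ eigenspace C (-I) = p := by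
  refine le_antisymm (sup_le inf_le_left inf_le_left) fun x hx ↦ ?_
  have hCC : C (C x) = -x := by simpa using LinearMap.congr_fun hC x
  have hCx : C x ∈ p := hp hx
  have hsplit : x = (2⁻¹ : ℂ) • (x - I • C x) + (2⁻¹ : ℂ) • (x + I • C x) := by
    match_scalars <;> ring
  rw [hsplit]
  refine Submodule.add_mem_sup (Submodule.mem_inf.2 ⟨?_, ?_⟩) (Submodule.mem_inf.2 ⟨?_, ?_⟩)
  · exact p.smul_mem _ (p.sub_mem hx (p.smul_mem _ hCx))
  · rw [mem_eigenspace_iff, map_smul, map_sub, map_smul, hCC]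
    match_scalars
    · linear_combination (2⁻¹ : ℂ) * I_mul_I
    · ring
  · exact p.smul_mem _ (p.add_mem hx (p.smul_mem _ hCx))
  · rw [mem_eigenspace_iff, map_smul, map_add, map_smul, hCC]
    match_scalars
    · linear_combination (2⁻¹ : ℂ) * I_mul_I
    · ring

lemma eigenspace_I_sup_eigenspace_neg_I (hC : C * C = -1) :
    eigenspace C I ⊔ eigenspace C (-I) = ⊤ := by
  simpa using inf_eigenspace_I_sup_inf_eigenspace_neg_I hC (p := ⊤) (Set.mapsTo_univ _ _)

lemma eigenspace_eq_inf_eigenspace_I_sup_inf_eigenspace_neg_I (hC : C * C = -1)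
    {F : End ℂ W} (hCF : Commute F C) (l : ℂ) :
    eigenspace F l = eigenspace F l ⊓ eigenspace C I ⊔ eigenspace F l ⊓ eigenspace C (-I) :=
  (inf_eigenspace_I_sup_inf_eigenspace_neg_I hC (mapsTo_genEigenspace_of_comm hCF l 1)).symm

end ComplexStructure

section CommutingComplexStructures

variable {W : Type*} [AddCommGroup W] [Module ℂ W]

lemma iSupIndep_inf_eigenspace_I_neg_I (A C : End ℂ W) :
    iSupIndep ![eigenspace A I ⊓ eigenspace C I, eigenspace A I ⊓ eigenspace C (-I),
      eigenspace A (-I) ⊓ eigenspace C (-I), eigenspace A (-I) ⊓ eigenspace C I] := by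
  convert iSupIndep_inf_eigenspace A C ![I, I, -I, -I] ![I, -I, -I, I] 2 ?_ using 1
  · funext i
    fin_cases i <;> rfl
  · intro i j
    fin_cases i <;> fin_cases j <;> norm_num [Complex.ext_iff]

variable {A C : End ℂ W}

lemma sup_inf_eigenspace_I_neg_I_eq_top (hA : A * A = -1) (hC : C * C = -1)
    (hAC : Commute A C) :
    eigenspace A I ⊓ eigenspace C I ⊔ eigenspace A I ⊓ eigenspace C (-I) ⊔
      eigenspace A (-I) ⊓ eigenspace C (-I) ⊔ eigenspace A (-I) ⊓ eigenspace C I = ⊤ := by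
  rw [sup_assoc _ (eigenspace A (-I) ⊓ eigenspace C (-I)),
    sup_comm (eigenspace A (-I) ⊓ eigenspace C (-I)),
    ← eigenspace_eq_inf_eigenspace_I_sup_inf_eigenspace_neg_I hC hAC I,
    ← eigenspace_eq_inf_eigenspace_I_sup_inf_eigenspace_neg_I hC hAC (-I)]
  exact eigenspace_I_sup_eigenspace_neg_I hA

lemma eigenspace_neg_mul_eq_sup (hA : A * A = -1) (hAC : Commute A C) {l ν ν' : ℂ}
    (h : I * ν = -l) (h' : -I * ν' = -l) :
    eigenspace (-(A * C)) l =
      eigenspace A I ⊓ eigenspace C ν ⊔ eigenspace A (-I) ⊓ eigenspace C ν' := by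
  rw [eigenspace_eq_inf_eigenspace_I_sup_inf_eigenspace_neg_I hA
      ((Commute.refl A).mul_left hAC.symm).neg_left,
    eigenspace_neg_mul_inf_eigenspace hAC I_ne_zero h,
    eigenspace_neg_mul_inf_eigenspace hAC (neg_ne_zero.2 I_ne_zero) h']

end CommutingComplexStructures

lemma LinearMap.baseChange_mul_self_eq_neg_one {R A M : Type*} [CommRing R] [CommRing A]
    [Algebra R A] [AddCommGroup M] [Module R M] {f : End R M} (hf : ∀ x, f (f x) = -x) :
    f.baseChange A * f.baseChange A = -1 := by
  rw [← LinearMap.baseChange_mul, show f * f = -1 from LinearMap.ext hf,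
    LinearMap.baseChange_neg, LinearMap.baseChange_one]

theorem stmt_18_general {V : Type*} [AddCommGroup V] [Module ℝ V]
    (J₁ J₂ : V →ₗ[ℝ] V)
    (hJ₁2 : ∀ a, J₁ (J₁ a) = -a) (hJ₂2 : ∀ a, J₂ (J₂ a) = -a)
    (hcomm : ∀ a, J₁ (J₂ a) = J₂ (J₁ a))
    (G : V →ₗ[ℝ] V) (hG : ∀ a, G a = -(J₁ (J₂ a))) :
    let J1c := LinearMap.baseChange ℂ J₁
    let J2c := LinearMap.baseChange ℂ J₂
    let Gc := LinearMap.baseChange ℂ G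
    let Lp := Module.End.eigenspace J1c Complex.I ⊓ Module.End.eigenspace J2c Complex.I
    let Lm := Module.End.eigenspace J1c Complex.I ⊓ Module.End.eigenspace J2c (-Complex.I)
    let Lpc := Module.End.eigenspace J1c (-Complex.I) ⊓ Module.End.eigenspace J2c (-Complex.I)
    let Lmc := Module.End.eigenspace J1c (-Complex.I) ⊓ Module.End.eigenspace J2c Complex.I
    iSupIndep ![Lp, Lm, Lpc, Lmc] ∧
    Lp ⊔ Lm ⊔ Lpc ⊔ Lmc = ⊤ ∧
    Module.End.eigenspace J1c Complex.I = Lp ⊔ Lm ∧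
    Module.End.eigenspace J2c Complex.I = Lp ⊔ Lmc ∧
    Module.End.eigenspace Gc 1 = Lp ⊔ Lpc ∧
    Module.End.eigenspace Gc (-1) = Lm ⊔ Lmc := by
  intro J1c J2c Gc Lp Lm Lpc Lmc
  have hA : J1c * J1c = -1 := J₁.baseChange_mul_self_eq_neg_one hJ₁2
  have hC : J2c * J2c = -1 := J₂.baseChange_mul_self_eq_neg_one hJ₂2
  have hAC : Commute J1c J2c :=
    (show Commute J₁ J₂ from LinearMap.ext hcomm).map (Module.End.baseChangeHom ℝ ℂ V)
  have hGc : Gc = -(J1c * J2c) := by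
    show G.baseChange ℂ = -(J₁.baseChange ℂ * J₂.baseChange ℂ)
    rw [show G = -(J₁ * J₂) from LinearMap.ext hG, LinearMap.baseChange_neg,
      LinearMap.baseChange_mul]
  refine ⟨iSupIndep_inf_eigenspace_I_neg_I J1c J2c, sup_inf_eigenspace_I_neg_I_eq_top hA hC hAC,
    eigenspace_eq_inf_eigenspace_I_sup_inf_eigenspace_neg_I hC hAC I, ?_, ?_, ?_⟩
  · rw [eigenspace_eq_inf_eigenspace_I_sup_inf_eigenspace_neg_I hA hAC.symm I,
      inf_comm _ (eigenspace J1c I), inf_comm _ (eigenspace J1c (-I))]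
  · rw [hGc]
    exact eigenspace_neg_mul_eq_sup hA hAC (by simp) (by simp)
  · rw [hGc]
    exact eigenspace_neg_mul_eq_sup hA hAC (by simp) (by simp)

/-- The linear algebra of a generalized Kähler structure: let `V` be a real vector
space with a non-degenerate symmetric bilinear form `B`, and `J₁, J₂` commuting
orthogonal complex structures on `V` such that `G = -J₁J₂` satisfies `G² = 1` and
`(a,b) ↦ B(Ga, b)` is positive definite.  Let `L₁, L₂ ⊆ V ⊗ ℂ` be the `+i`
eigenspaces of `J₁, J₂` and set `L₁⁺ = L₁ ∩ L₂`, `L₁⁻ = L₁ ∩ conj(L₂)` (where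
`conj(L₁⁺)`, `conj(L₁⁻)` are the simultaneous `-i` eigenspaces).  Then
`V ⊗ ℂ = L₁⁺ ⊕ L₁⁻ ⊕ conj(L₁⁺) ⊕ conj(L₁⁻)`, `L₁ = L₁⁺ ⊕ L₁⁻`,
`L₂ = L₁⁺ ⊕ conj(L₁⁻)`, the `+1` eigenspace of `G` complexifies to
`L₁⁺ ⊕ conj(L₁⁺)` and the `-1` eigenspace to `L₁⁻ ⊕ conj(L₁⁻)`. -/
theorem stmt_18 {V : Type*} [AddCommGroup V] [Module ℝ V]
    (B : LinearMap.BilinForm ℝ V)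
    (hsymm : ∀ a b, B a b = B b a)
    (hnondeg : ∀ a, (∀ b, B a b = 0) → a = 0)
    (J₁ J₂ : V →ₗ[ℝ] V)
    (hJ₁2 : ∀ a, J₁ (J₁ a) = -a) (hJ₂2 : ∀ a, J₂ (J₂ a) = -a)
    (hJ₁B : ∀ a b, B (J₁ a) (J₁ b) = B a b)
    (hJ₂B : ∀ a b, B (J₂ a) (J₂ b) = B a b)
    (hcomm : ∀ a, J₁ (J₂ a) = J₂ (J₁ a))
    (G : V →ₗ[ℝ] V) (hG : ∀ a, G a = -(J₁ (J₂ a)))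
    (hG2 : ∀ a, G (G a) = a)
    (hpos : ∀ a : V, a ≠ 0 → 0 < B (G a) a) :
    let J1c := LinearMap.baseChange ℂ J₁
    let J2c := LinearMap.baseChange ℂ J₂
    let Gc := LinearMap.baseChange ℂ G
    let Lp := Module.End.eigenspace J1c Complex.I ⊓ Module.End.eigenspace J2c Complex.I
    let Lm := Module.End.eigenspace J1c Complex.I ⊓ Module.End.eigenspace J2c (-Complex.I)
    let Lpc := Module.End.eigenspace J1c (-Complex.I) ⊓ Module.End.eigenspace J2c (-Complex.I)
    let Lmc := Module.End.eigenspace J1c (-Complex.I) ⊓ Module.End.eigenspace J2c Complex.I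
    iSupIndep ![Lp, Lm, Lpc, Lmc] ∧
    Lp ⊔ Lm ⊔ Lpc ⊔ Lmc = ⊤ ∧
    Module.End.eigenspace J1c Complex.I = Lp ⊔ Lm ∧
    Module.End.eigenspace J2c Complex.I = Lp ⊔ Lmc ∧
    Module.End.eigenspace Gc 1 = Lp ⊔ Lpc ∧
    Module.End.eigenspace Gc (-1) = Lm ⊔ Lmc :=
  stmt_18_general J₁ J₂ hJ₁2 hJ₂2 hcomm G hG
end

section
/- With the generalized Kähler linear algebra as above, write infinitesimal deformations of J₁, J₂ as ε₁ ∈ ∧²L₁*, ε₂ ∈ ∧²L₂*, decomposed as ε₁ = (ε₁⁽¹⁾, ε₁⁽²⁾, ε₁⁽³⁾) under ∧²L₁* = ∧²(L₁⁺)* ⊕ ((L₁⁺)*⊗(L₁⁻)*) ⊕ ∧²(L₁⁻)*, and similarly ε₂ with conj(L₁⁻) in place of L₁⁻. Then the first-order condition [J₁'(t), J₂'(t)] = 0 at t = 0, where Jᵢ'(t) = Jᵢ + t(2i εᵢ - 2i conj(εᵢ)) + O(t²), is equivalent to ε₂⁽¹⁾ = ε₁⁽¹⁾ and ε₂⁽³⁾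 = conj(ε₁⁽³⁾). -/
/-!
Put `K = [J₁, A₂] + [A₁, J₂]` and evaluate it on the four eigenspaces. For `w ∈ L₁⁺` the vector
`c w` lies in `conj(L₁⁺)`, which both `εᵢ` kill, so `Aᵢ w = 2i εᵢ w`; subtracting the common
eigenvalue `i` of `J₁, J₂` at `w` kills every component of `εᵢ w` except the one in `conj(L₁⁺)`,
and `K w = 4 (ε₂⁽¹⁾ - ε₁⁽¹⁾) w`. Likewise `K w = -4 (ε₂⁽³⁾ - conj(ε₁⁽³⁾)) w` on `conj(L₁⁻)`.
Since `J₁, J₂, A₁, A₂` commute with `c`, so does `K`; as `c` exchanges `L₁⁺ ↔ conj(L₁⁺)` and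
`L₁⁻ ↔ conj(L₁⁻)`, `K` vanishes everywhere once it vanishes on `L₁⁺` and on `conj(L₁⁻)`.
-/

open Complex ComplexConjugate

section ProjDecomp

variable {ι R W : Type*} [Fintype ι] [CommRing R] [AddCommGroup W] [Module R W]

structure IsProjDecomp (P : ι → Module.End R W) (L : ι → Submodule R W) : Prop where
  sum_apply (w : W) : ∑ i, P i w = w
  apply_mem (i : ι) (w : W) : P i w ∈ L i
  apply_of_mem {i : ι} {w : W} : w ∈ L i → P i w = w
  apply_of_mem_of_ne {i j : ι} : i ≠ j → ∀ {w : W}, w ∈ L j → P i w = 0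

namespace IsProjDecomp

variable {P : ι → Module.End R W} {L : ι → Submodule R W}

theorem of_fin_four {P₀ P₁ P₂ P₃ : Module.End R W} {L₀ L₁ L₂ L₃ : Submodule R W}
    (hsum : ∀ w, P₀ w + P₁ w + P₂ w + P₃ w = w)
    (hmem₀ : ∀ w, P₀ w ∈ L₀) (hmem₁ : ∀ w, P₁ w ∈ L₁)
    (hmem₂ : ∀ w, P₂ w ∈ L₂) (hmem₃ : ∀ w, P₃ w ∈ L₃)
    (hid₀ : ∀ w ∈ L₀, P₀ w = w) (hid₁ : ∀ w ∈ L₁, P₁ w = w)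
    (hid₂ : ∀ w ∈ L₂, P₂ w = w) (hid₃ : ∀ w ∈ L₃, P₃ w = w)
    (hann₀ : ∀ w, (w ∈ L₁ ∨ w ∈ L₂ ∨ w ∈ L₃) → P₀ w = 0)
    (hann₁ : ∀ w, (w ∈ L₀ ∨ w ∈ L₂ ∨ w ∈ L₃) → P₁ w = 0)
    (hann₂ : ∀ w, (w ∈ L₀ ∨ w ∈ L₁ ∨ w ∈ L₃) → P₂ w = 0)
    (hann₃ : ∀ w, (w ∈ L₀ ∨ w ∈ L₁ ∨ w ∈ L₂) → P₃ w = 0) :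
    IsProjDecomp ![P₀, P₁, P₂, P₃] ![L₀, L₁, L₂, L₃] where
  sum_apply w := by simpa [Fin.sum_univ_four] using hsum w
  apply_mem i w := by fin_cases i <;> simp [hmem₀, hmem₁, hmem₂, hmem₃]
  apply_of_mem {i w} hw := by
    fin_cases i
    exacts [hid₀ w hw, hid₁ w hw, hid₂ w hw, hid₃ w hw]
  apply_of_mem_of_ne {i j} hij w hw := by
    fin_cases i <;> fin_cases j <;> simp at hij hw ⊢
    all_goals first
      | exact hann₀ w (by tauto) | exact hann₁ w (by tauto)
      | exact hann₂ w (by tauto) | exact hann₃ w (by tauto)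

theorem eq_zero_of_forall_mem (hd : IsProjDecomp P L) {K : Module.End R W}
    (hK : ∀ i, ∀ w ∈ L i, K w = 0) : K = 0 := by
  ext w
  rw [← hd.sum_apply w, map_sum, LinearMap.zero_apply]
  exact Finset.sum_eq_zero fun i _ => hK i _ (hd.apply_mem i w)

theorem apply_eq_zero_of_mem_sup (hd : IsProjDecomp P L) {i j k : ι} (hj : i ≠ j) (hk : i ≠ k)
    {w : W} (hw : w ∈ L j ⊔ L k) : P i w = 0 :=
  (sup_le (fun _ => hd.apply_of_mem_of_ne hj) (fun _ => hd.apply_of_mem_of_ne hk) :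
    L j ⊔ L k ≤ LinearMap.ker (P i)) hw

theorem apply_eq_sum_smul (hd : IsProjDecomp P L) {J : Module.End R W} {μ : ι → R}
    (hJ : ∀ i, ∀ w ∈ L i, J w = μ i • w) (v : W) : J v = ∑ i, μ i • P i v := by
  conv_lhs => rw [← hd.sum_apply v]
  rw [map_sum]
  exact Finset.sum_congr rfl fun i _ => hJ i _ (hd.apply_mem i v)

theorem apply_sub_smul_of_mem_sup [DecidableEq ι] (hd : IsProjDecomp P L) {J : Module.End R W}
    {μ : ι → R} (hJ : ∀ i, ∀ w ∈ L i, J w = μ i • w) {j k : ι} {w : W} (hw : w ∈ L j ⊔ L k) :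
    J w - μ j • w = (μ k - μ j) • P k w := by
  have hsmul : μ j • w = ∑ i, μ j • P i w := by rw [← Finset.smul_sum, hd.sum_apply]
  rw [hd.apply_eq_sum_smul hJ, hsmul, ← Finset.sum_sub_distrib, Finset.sum_eq_single k]
  · exact (sub_smul _ _ _).symm
  · intro i _ hik
    by_cases hij : i = j
    · rw [hij, sub_self]
    · rw [hd.apply_eq_zero_of_mem_sup hij hik hw, smul_zero, smul_zero, sub_zero]
  · simp

variable {τ : R →+* R} (c : W →ₛₗ[τ] W) {σ : ι → ι}

theorem apply_conj [DecidableEq ι] (hd : IsProjDecomp P L) (hσ : σ.Injective)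
    (hc : ∀ i, ∀ w ∈ L i, c w ∈ L (σ i)) (i : ι) (v : W) :
    P (σ i) (c v) = c (P i v) := by
  conv_lhs => rw [← hd.sum_apply v, map_sum, map_sum]
  rw [Finset.sum_eq_single i]
  · exact hd.apply_of_mem (hc i _ (hd.apply_mem i v))
  · exact fun j _ hji => hd.apply_of_mem_of_ne (hσ.ne hji.symm) (hc j _ (hd.apply_mem j v))
  · simp

theorem eigen_apply_conj (hd : IsProjDecomp P L) (hc : ∀ i, ∀ w ∈ L i, c w ∈ L (σ i))
    {J : Module.End R W} {μ : ι → R} (hJ : ∀ i, ∀ w ∈ L i, J w = μ i • w)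
    (hμ : ∀ i, μ (σ i) = τ (μ i)) (v : W) :
    J (c v) = c (J v) := by
  rw [hd.apply_eq_sum_smul hJ v, map_sum]
  conv_lhs => rw [← hd.sum_apply v, map_sum, map_sum]
  refine Finset.sum_congr rfl fun i _ => ?_
  rw [map_smulₛₗ, hJ _ _ (hc i _ (hd.apply_mem i v)), hμ]

end IsProjDecomp

end ProjDecomp

section ConjLinear

variable {W : Type*} [AddCommGroup W] [Module ℂ W] [Module ℝ W] [IsScalarTower ℝ ℂ W]

theorem smul_eq_re_smul_add_im_smul_I (z : ℂ) (w : W) : z • w = z.re • w + z.im • (I • w) := by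
  rw [RCLike.real_smul_eq_coe_smul (K := ℂ), RCLike.real_smul_eq_coe_smul (K := ℂ), smul_smul,
    ← add_smul]
  simp

def conjLinearOfSmulI (c : W →ₗ[ℝ] W) (hc : ∀ w, c (I • w) = -(I • c w)) : W →ₗ⋆[ℂ] W where
  toFun := c
  map_add' := c.map_add
  map_smul' z w := by
    rw [smul_eq_re_smul_add_im_smul_I z w, smul_eq_re_smul_add_im_smul_I (conj z) (c w),
      map_add, map_smul, map_smul, hc]
    simp

end ConjLinear

section Deformation

variable {W : Type*} [AddCommGroup W] [Module ℂ W]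

def deformationTerm (c : W →ₗ⋆[ℂ] W) (ε : Module.End ℂ W) : Module.End ℂ W :=
  (2 * I) • ε - (2 * I) • (c ∘ₛₗ ε ∘ₛₗ c)

theorem deformationTerm_apply (c : W →ₗ⋆[ℂ] W) (ε : Module.End ℂ W) (w : W) :
    deformationTerm c ε w = (2 * I) • ε w - (2 * I) • c (ε (c w)) :=
  rfl

theorem deformationTerm_apply_conj {c : W →ₗ⋆[ℂ] W} (hc : ∀ w, c (c w) = w)
    (ε : Module.End ℂ W) (v : W) : deformationTerm c ε (c v) = c (deformationTerm c ε v) := by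
  simp only [deformationTerm_apply, hc, map_sub, map_smulₛₗ, map_mul, map_ofNat, conj_I]
  module

theorem lie_add_lie_apply_of_eigen {J₁ J₂ A₁ A₂ : Module.End ℂ W} {a b : ℂ} {w : W}
    (h₁ : J₁ w = a • w) (h₂ : J₂ w = b • w) :
    (⁅J₁, A₂⁆ + ⁅A₁, J₂⁆) w = (J₁ (A₂ w) - a • A₂ w) - (J₂ (A₁ w) - b • A₁ w) := by
  simp only [Ring.lie_def, LinearMap.add_apply, LinearMap.sub_apply, Module.End.mul_apply, h₁, h₂,
    map_smul]
  abel

theorem lie_add_lie_apply_conj {J₁ J₂ A₁ A₂ : Module.End ℂ W} (c : W →ₗ⋆[ℂ] W)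
    (hJ₁ : ∀ v, J₁ (c v) = c (J₁ v)) (hJ₂ : ∀ v, J₂ (c v) = c (J₂ v))
    (hA₁ : ∀ v, A₁ (c v) = c (A₁ v)) (hA₂ : ∀ v, A₂ (c v) = c (A₂ v)) (v : W) :
    (⁅J₁, A₂⁆ + ⁅A₁, J₂⁆) (c v) = c ((⁅J₁, A₂⁆ + ⁅A₁, J₂⁆) v) := by
  simp only [Ring.lie_def, LinearMap.add_apply, LinearMap.sub_apply, Module.End.mul_apply, hJ₁, hJ₂,
    hA₁, hA₂, map_add, map_sub]

end Deformation

section GeneralizedKahler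

variable {W : Type*} [AddCommGroup W] [Module ℂ W]

/-- The indices `0, 1, 2, 3` stand for `L₁⁺, L₁⁻, conj(L₁⁺), conj(L₁⁻)`. -/
structure IsGKSplitting (J₁ J₂ : Module.End ℂ W) (c : W →ₗ⋆[ℂ] W) (P : Fin 4 → Module.End ℂ W)
    (L : Fin 4 → Submodule ℂ W) : Prop extends IsProjDecomp P L where
  J₁_apply : ∀ i, ∀ w ∈ L i, J₁ w = ![I, I, -I, -I] i • w
  J₂_apply : ∀ i, ∀ w ∈ L i, J₂ w = ![I, -I, -I, I] i • w
  conj_conj (w : W) : c (c w) = w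
  conj_mem : ∀ i, ∀ w ∈ L i, c w ∈ L (![2, 3, 0, 1] i)

namespace IsGKSplitting

variable {J₁ J₂ : Module.End ℂ W} {c : W →ₗ⋆[ℂ] W} {P : Fin 4 → Module.End ℂ W}
  {L : Fin 4 → Submodule ℂ W} {ε₁ ε₂ : Module.End ℂ W}

theorem apply_conj (hs : IsGKSplitting J₁ J₂ c P L) (i : Fin 4) (v : W) :
    P (![2, 3, 0, 1] i) (c v) = c (P i v) :=
  hs.toIsProjDecomp.apply_conj c (by decide) hs.conj_mem i v

theorem J₁_apply_conj (hs : IsGKSplitting J₁ J₂ c P L) (v : W) : J₁ (c v) = c (J₁ v) :=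
  hs.eigen_apply_conj c hs.conj_mem hs.J₁_apply (fun i => by fin_cases i <;> simp) v

theorem J₂_apply_conj (hs : IsGKSplitting J₁ J₂ c P L) (v : W) : J₂ (c v) = c (J₂ v) :=
  hs.eigen_apply_conj c hs.conj_mem hs.J₂_apply (fun i => by fin_cases i <;> simp) v

theorem lie_deformationTerm_apply_conj (hs : IsGKSplitting J₁ J₂ c P L) (v : W) :
    (⁅J₁, deformationTerm c ε₂⁆ + ⁅deformationTerm c ε₁, J₂⁆) (c v)
      = c ((⁅J₁, deformationTerm c ε₂⁆ + ⁅deformationTerm c ε₁, J₂⁆) v) :=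
  lie_add_lie_apply_conj c hs.J₁_apply_conj hs.J₂_apply_conj
    (deformationTerm_apply_conj hs.conj_conj ε₁) (deformationTerm_apply_conj hs.conj_conj ε₂) v

theorem lie_deformationTerm_apply_of_mem_zero (hs : IsGKSplitting J₁ J₂ c P L)
    (hε₁_ran : ∀ w, ε₁ w ∈ L 2 ⊔ L 3) (hε₁_van : ∀ w, w ∈ L 2 ∨ w ∈ L 3 → ε₁ w = 0)
    (hε₂_ran : ∀ w, ε₂ w ∈ L 2 ⊔ L 1) (hε₂_van : ∀ w, w ∈ L 2 ∨ w ∈ L 1 → ε₂ w = 0)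
    {w : W} (hw : w ∈ L 0) :
    (⁅J₁, deformationTerm c ε₂⁆ + ⁅deformationTerm c ε₁, J₂⁆) w
      = (4 : ℂ) • (P 2 (ε₂ w) - P 2 (ε₁ w)) := by
  have hcw : c w ∈ L 2 := hs.conj_mem 0 w hw
  have hA₁ : deformationTerm c ε₁ w = (2 * I) • ε₁ w := by
    rw [deformationTerm_apply, hε₁_van _ (Or.inl hcw), map_zero, smul_zero, sub_zero]
  have hA₂ : deformationTerm c ε₂ w = (2 * I) • ε₂ w := by
    rw [deformationTerm_apply, hε₂_van _ (Or.inl hcw), map_zero, smul_zero, sub_zero]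
  have h₁ : J₁ (ε₂ w) - I • ε₂ w = (-I - I) • P 2 (ε₂ w) := by
    simpa using hs.apply_sub_smul_of_mem_sup hs.J₁_apply (j := 1) (k := 2)
      ((sup_comm (L 2) (L 1)).le (hε₂_ran w))
  have h₂ : J₂ (ε₁ w) - I • ε₁ w = (-I - I) • P 2 (ε₁ w) := by
    simpa using hs.apply_sub_smul_of_mem_sup hs.J₂_apply (j := 3) (k := 2)
      ((sup_comm (L 2) (L 3)).le (hε₁_ran w))
  rw [lie_add_lie_apply_of_eigen (hs.J₁_apply 0 w hw) (hs.J₂_apply 0 w hw), hA₁, hA₂, map_smul,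
    map_smul, smul_comm _ (2 * I), smul_comm _ (2 * I), ← smul_sub, ← smul_sub]
  simp only [Matrix.cons_val]
  rw [h₁, h₂]
  linear_combination (norm := module) I_sq • ((-4 : ℂ) • (P 2 (ε₂ w) - P 2 (ε₁ w)))

theorem lie_deformationTerm_apply_of_mem_three (hs : IsGKSplitting J₁ J₂ c P L)
    (hε₁_ran : ∀ w, ε₁ w ∈ L 2 ⊔ L 3) (hε₁_van : ∀ w, w ∈ L 2 ∨ w ∈ L 3 → ε₁ w = 0)
    (hε₂_ran : ∀ w, ε₂ w ∈ L 2 ⊔ L 1) (hε₂_van : ∀ w, w ∈ L 2 ∨ w ∈ L 1 → ε₂ w = 0)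
    {w : W} (hw : w ∈ L 3) :
    (⁅J₁, deformationTerm c ε₂⁆ + ⁅deformationTerm c ε₁, J₂⁆) w
      = (-4 : ℂ) • (P 1 (ε₂ w) - c (P 3 (ε₁ (c w)))) := by
  have hcw : c w ∈ L 1 := hs.conj_mem 3 w hw
  have hA₁ : deformationTerm c ε₁ w = (-(2 * I)) • c (ε₁ (c w)) := by
    rw [deformationTerm_apply, hε₁_van _ (Or.inr hw), smul_zero, zero_sub, neg_smul]
  have hA₂ : deformationTerm c ε₂ w = (2 * I) • ε₂ w := by
    rw [deformationTerm_apply, hε₂_van _ (Or.inr hcw), map_zero, smul_zero, sub_zero]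
  have hmem : c (ε₁ (c w)) ∈ L 0 ⊔ L 1 := by
    obtain ⟨a, ha, b, hb, hab⟩ := Submodule.mem_sup.mp (hε₁_ran (c w))
    rw [← hab, map_add]
    exact Submodule.add_mem_sup (hs.conj_mem 2 a ha) (hs.conj_mem 3 b hb)
  have h₁ : J₁ (ε₂ w) - (-I) • ε₂ w = (I - -I) • P 1 (ε₂ w) := by
    simpa using hs.apply_sub_smul_of_mem_sup hs.J₁_apply (j := 2) (k := 1) (hε₂_ran w)
  have h₂ : J₂ (c (ε₁ (c w))) - I • c (ε₁ (c w)) = (-I - I) • c (P 3 (ε₁ (c w))) := by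
    rw [← hs.apply_conj 3]
    simpa using hs.apply_sub_smul_of_mem_sup hs.J₂_apply (j := 0) (k := 1) hmem
  rw [lie_add_lie_apply_of_eigen (hs.J₁_apply 3 w hw) (hs.J₂_apply 3 w hw), hA₁, hA₂, map_smul,
    map_smul, smul_comm _ (2 * I), smul_comm _ (-(2 * I)), ← smul_sub, ← smul_sub]
  simp only [Matrix.cons_val]
  rw [h₁, h₂]
  linear_combination (norm := module) I_sq • ((4 : ℂ) • (P 1 (ε₂ w) - c (P 3 (ε₁ (c w)))))

theorem lie_deformationTerm_eq_zero_iff (hs : IsGKSplitting J₁ J₂ c P L)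
    (hε₁_ran : ∀ w, ε₁ w ∈ L 2 ⊔ L 3) (hε₁_van : ∀ w, w ∈ L 2 ∨ w ∈ L 3 → ε₁ w = 0)
    (hε₂_ran : ∀ w, ε₂ w ∈ L 2 ⊔ L 1) (hε₂_van : ∀ w, w ∈ L 2 ∨ w ∈ L 1 → ε₂ w = 0) :
    ⁅J₁, deformationTerm c ε₂⁆ + ⁅deformationTerm c ε₁, J₂⁆ = 0 ↔
      (∀ w ∈ L 0, P 2 (ε₂ w) = P 2 (ε₁ w)) ∧ (∀ w ∈ L 3, P 1 (ε₂ w) = c (P 3 (ε₁ (c w)))) := by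
  set K := ⁅J₁, deformationTerm c ε₂⁆ + ⁅deformationTerm c ε₁, J₂⁆
  have hK₀ : ∀ w ∈ L 0, K w = 0 ↔ P 2 (ε₂ w) = P 2 (ε₁ w) := fun w hw => by
    rw [hs.lie_deformationTerm_apply_of_mem_zero hε₁_ran hε₁_van hε₂_ran hε₂_van hw, smul_eq_zero,
      sub_eq_zero, or_iff_right (by norm_num)]
  have hK₃ : ∀ w ∈ L 3, K w = 0 ↔ P 1 (ε₂ w) = c (P 3 (ε₁ (c w))) := fun w hw => by
    rw [hs.lie_deformationTerm_apply_of_mem_three hε₁_ran hε₁_van hε₂_ran hε₂_van hw, smul_eq_zero,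
      sub_eq_zero, or_iff_right (by norm_num)]
  refine ⟨fun hK => ⟨fun w hw => (hK₀ w hw).1 (by rw [hK]; rfl),
    fun w hw => (hK₃ w hw).1 (by rw [hK]; rfl)⟩, fun ⟨h₀, h₃⟩ => ?_⟩
  have hK_conj : ∀ w, K (c w) = 0 → K w = 0 := fun w h => by
    rw [← hs.conj_conj w, hs.lie_deformationTerm_apply_conj, h, map_zero]
  refine hs.eq_zero_of_forall_mem fun i w hw => ?_
  fin_cases i
  · exact (hK₀ w hw).2 (h₀ w hw)
  · exact hK_conj w ((hK₃ _ (hs.conj_mem 1 w hw)).2 (h₃ _ (hs.conj_mem 1 w hw)))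
  · exact hK_conj w ((hK₀ _ (hs.conj_mem 2 w hw)).2 (h₀ _ (hs.conj_mem 2 w hw)))
  · exact (hK₃ w hw).2 (h₃ w hw)

end IsGKSplitting

end GeneralizedKahler

theorem stmt_19_general {W : Type*} [AddCommGroup W] [Module ℂ W]
    [Module ℝ W] [IsScalarTower ℝ ℂ W] [SMulCommClass ℝ ℂ W]
    (J₁ J₂ : W →ₗ[ℂ] W)
    (Lp Lm Lpc Lmc : Submodule ℂ W)
    (hLp : ∀ w ∈ Lp, J₁ w = Complex.I • w ∧ J₂ w = Complex.I • w)
    (hLm : ∀ w ∈ Lm, J₁ w = Complex.I • w ∧ J₂ w = -(Complex.I • w))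
    (hLpc : ∀ w ∈ Lpc, J₁ w = -(Complex.I • w) ∧ J₂ w = -(Complex.I • w))
    (hLmc : ∀ w ∈ Lmc, J₁ w = -(Complex.I • w) ∧ J₂ w = Complex.I • w)
    (Pp Pm Ppc Pmc : W →ₗ[ℂ] W)
    (hP_sum : ∀ w, Pp w + Pm w + Ppc w + Pmc w = w)
    (hPp_mem : ∀ w, Pp w ∈ Lp) (hPm_mem : ∀ w, Pm w ∈ Lm)
    (hPpc_mem : ∀ w, Ppc w ∈ Lpc) (hPmc_mem : ∀ w, Pmc w ∈ Lmc)
    (hPp_id : ∀ w ∈ Lp, Pp w = w) (hPm_id : ∀ w ∈ Lm, Pm w = w)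
    (hPpc_id : ∀ w ∈ Lpc, Ppc w = w) (hPmc_id : ∀ w ∈ Lmc, Pmc w = w)
    (hPp_ann : ∀ w, (w ∈ Lm ∨ w ∈ Lpc ∨ w ∈ Lmc) → Pp w = 0)
    (hPm_ann : ∀ w, (w ∈ Lp ∨ w ∈ Lpc ∨ w ∈ Lmc) → Pm w = 0)
    (hPpc_ann : ∀ w, (w ∈ Lp ∨ w ∈ Lm ∨ w ∈ Lmc) → Ppc w = 0)
    (hPmc_ann : ∀ w, (w ∈ Lp ∨ w ∈ Lm ∨ w ∈ Lpc) → Pmc w = 0)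
    -- the real structure (conjugation) exchanging the eigenspaces
    (c : W →ₗ[ℝ] W)
    (hc_invol : ∀ w, c (c w) = w)
    (hc_antilin : ∀ w, c (Complex.I • w) = -(Complex.I • c w))
    (hc_Lp : ∀ w ∈ Lp, c w ∈ Lpc) (hc_Lpc : ∀ w ∈ Lpc, c w ∈ Lp)
    (hc_Lm : ∀ w ∈ Lm, c w ∈ Lmc) (hc_Lmc : ∀ w ∈ Lmc, c w ∈ Lm)
    -- the deformations ε₁ ∈ ∧²L₁^*, ε₂ ∈ ∧²L₂^*, extended by zero
    (ε₁ ε₂ : W →ₗ[ℂ] W)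
    (hε₁_ran : ∀ w, ε₁ w ∈ Lpc ⊔ Lmc)
    (hε₁_van : ∀ w, (w ∈ Lpc ∨ w ∈ Lmc) → ε₁ w = 0)
    (hε₂_ran : ∀ w, ε₂ w ∈ Lpc ⊔ Lm)
    (hε₂_van : ∀ w, (w ∈ Lpc ∨ w ∈ Lm) → ε₂ w = 0) :
    -- the first-order terms Aᵢ = 2i εᵢ - 2i conj(εᵢ), as real-linear endomorphisms
    let A₁ : W →ₗ[ℝ] W :=
      ((2 * Complex.I) • (ε₁.restrictScalars ℝ))
        - ((2 * Complex.I) • (c ∘ₗ (ε₁.restrictScalars ℝ) ∘ₗ c))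
    let A₂ : W →ₗ[ℝ] W :=
      ((2 * Complex.I) • (ε₂.restrictScalars ℝ))
        - ((2 * Complex.I) • (c ∘ₗ (ε₂.restrictScalars ℝ) ∘ₗ c))
    -- [J₁, A₂] + [A₁, J₂] = 0  ↔  ε₂⁽¹⁾ = ε₁⁽¹⁾ and ε₂⁽³⁾ = conj(ε₁⁽³⁾)
    ((J₁.restrictScalars ℝ ∘ₗ A₂ - A₂ ∘ₗ J₁.restrictScalars ℝ)
      + (A₁ ∘ₗ J₂.restrictScalars ℝ - J₂.restrictScalars ℝ ∘ₗ A₁) = 0)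
    ↔ ((∀ w ∈ Lp, Ppc (ε₂ w) = Ppc (ε₁ w)) ∧
       (∀ w ∈ Lmc, Pm (ε₂ w) = c (Pmc (ε₁ (c w))))) := by
  intro A₁ A₂
  let c' := conjLinearOfSmulI c hc_antilin
  have hs : IsGKSplitting J₁ J₂ c' ![Pp, Pm, Ppc, Pmc] ![Lp, Lm, Lpc, Lmc] :=
    { IsProjDecomp.of_fin_four hP_sum hPp_mem hPm_mem hPpc_mem hPmc_mem hPp_id hPm_id hPpc_id
        hPmc_id hPp_ann hPm_ann hPpc_ann hPmc_ann with
      J₁_apply i w hw := by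
        fin_cases i
        exacts [(hLp w hw).1, (hLm w hw).1, (hLpc w hw).1.trans (neg_smul _ _).symm,
          (hLmc w hw).1.trans (neg_smul _ _).symm]
      J₂_apply i w hw := by
        fin_cases i
        exacts [(hLp w hw).2, (hLm w hw).2.trans (neg_smul _ _).symm,
          (hLpc w hw).2.trans (neg_smul _ _).symm, (hLmc w hw).2]
      conj_conj := hc_invol
      conj_mem i w hw := by
        fin_cases i
        exacts [hc_Lp w hw, hc_Lm w hw, hc_Lpc w hw, hc_Lmc w hw] }
  have hK : (J₁.restrictScalars ℝ ∘ₗ A₂ - A₂ ∘ₗ J₁.restrictScalars ℝ)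
        + (A₁ ∘ₗ J₂.restrictScalars ℝ - J₂.restrictScalars ℝ ∘ₗ A₁)
      = (⁅J₁, deformationTerm c' ε₂⁆ + ⁅deformationTerm c' ε₁, J₂⁆).restrictScalars ℝ :=
    LinearMap.ext fun _ => rfl
  rw [hK, ← LinearMap.restrictScalars_zero (S := ℂ) ℝ, LinearMap.restrictScalars_inj]
  exact hs.lie_deformationTerm_eq_zero_iff hε₁_ran hε₁_van hε₂_ran hε₂_van

/-- First-order deformations of a generalized Kähler pair.  Let `W = V ⊗ ℂ` be the
complexification of a quadratic vector space carrying a generalized Kähler pair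
`(J₁, J₂)`, with simultaneous eigenspace decomposition
`W = L₁⁺ ⊕ L₁⁻ ⊕ conj(L₁⁺) ⊕ conj(L₁⁻)` (denoted `Lp, Lm, Lpc, Lmc`, with
projections `Pp, Pm, Ppc, Pmc` and conjugation `c`).  Infinitesimal deformations
`ε₁ : L₁ → L̄₁` and `ε₂ : L₂ → L̄₂` (extended by zero) deform `Jᵢ` to
`Jᵢ'(t) = Jᵢ + t(2i εᵢ - 2i conj(εᵢ)) + O(t²)`.  Then the first-order condition
`[J₁'(t), J₂'(t)] = 0` at `t = 0` is equivalent to `ε₂⁽¹⁾ = ε₁⁽¹⁾` (the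
`∧²(L₁⁺)^*` components agree) and `ε₂⁽³⁾ = conj(ε₁⁽³⁾)` (the `∧²`-components on
`L₁⁻` are conjugate). -/
theorem stmt_19 {W : Type*} [AddCommGroup W] [Module ℂ W]
    [Module ℝ W] [IsScalarTower ℝ ℂ W] [SMulCommClass ℝ ℂ W]
    (J₁ J₂ : W →ₗ[ℂ] W)
    (hJ₁2 : ∀ w, J₁ (J₁ w) = -w) (hJ₂2 : ∀ w, J₂ (J₂ w) = -w)
    (hJcomm : ∀ w, J₁ (J₂ w) = J₂ (J₁ w))
    (Lp Lm Lpc Lmc : Submodule ℂ W)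
    (hLp : ∀ w ∈ Lp, J₁ w = Complex.I • w ∧ J₂ w = Complex.I • w)
    (hLm : ∀ w ∈ Lm, J₁ w = Complex.I • w ∧ J₂ w = -(Complex.I • w))
    (hLpc : ∀ w ∈ Lpc, J₁ w = -(Complex.I • w) ∧ J₂ w = -(Complex.I • w))
    (hLmc : ∀ w ∈ Lmc, J₁ w = -(Complex.I • w) ∧ J₂ w = Complex.I • w)
    (hindep : iSupIndep ![Lp, Lm, Lpc, Lmc])
    (Pp Pm Ppc Pmc : W →ₗ[ℂ] W)
    (hP_sum : ∀ w, Pp w + Pm w + Ppc w + Pmc w = w)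
    (hPp_mem : ∀ w, Pp w ∈ Lp) (hPm_mem : ∀ w, Pm w ∈ Lm)
    (hPpc_mem : ∀ w, Ppc w ∈ Lpc) (hPmc_mem : ∀ w, Pmc w ∈ Lmc)
    (hPp_id : ∀ w ∈ Lp, Pp w = w) (hPm_id : ∀ w ∈ Lm, Pm w = w)
    (hPpc_id : ∀ w ∈ Lpc, Ppc w = w) (hPmc_id : ∀ w ∈ Lmc, Pmc w = w)
    (hPp_ann : ∀ w, (w ∈ Lm ∨ w ∈ Lpc ∨ w ∈ Lmc) → Pp w = 0)
    (hPm_ann : ∀ w, (w ∈ Lp ∨ w ∈ Lpc ∨ w ∈ Lmc) → Pm w = 0)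
    (hPpc_ann : ∀ w, (w ∈ Lp ∨ w ∈ Lm ∨ w ∈ Lmc) → Ppc w = 0)
    (hPmc_ann : ∀ w, (w ∈ Lp ∨ w ∈ Lm ∨ w ∈ Lpc) → Pmc w = 0)
    -- the real structure (conjugation) exchanging the eigenspaces
    (c : W →ₗ[ℝ] W)
    (hc_invol : ∀ w, c (c w) = w)
    (hc_antilin : ∀ w, c (Complex.I • w) = -(Complex.I • c w))
    (hc_Lp : ∀ w ∈ Lp, c w ∈ Lpc) (hc_Lpc : ∀ w ∈ Lpc, c w ∈ Lp)
    (hc_Lm : ∀ w ∈ Lm, c w ∈ Lmc) (hc_Lmc : ∀ w ∈ Lmc, c w ∈ Lm)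
    -- the deformations ε₁ ∈ ∧²L₁^*, ε₂ ∈ ∧²L₂^*, extended by zero
    (ε₁ ε₂ : W →ₗ[ℂ] W)
    (hε₁_ran : ∀ w, ε₁ w ∈ Lpc ⊔ Lmc)
    (hε₁_van : ∀ w, (w ∈ Lpc ∨ w ∈ Lmc) → ε₁ w = 0)
    (hε₂_ran : ∀ w, ε₂ w ∈ Lpc ⊔ Lm)
    (hε₂_van : ∀ w, (w ∈ Lpc ∨ w ∈ Lm) → ε₂ w = 0) :
    -- the first-order terms Aᵢ = 2i εᵢ - 2i conj(εᵢ), as real-linear endomorphisms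
    let A₁ : W →ₗ[ℝ] W :=
      ((2 * Complex.I) • (ε₁.restrictScalars ℝ))
        - ((2 * Complex.I) • (c ∘ₗ (ε₁.restrictScalars ℝ) ∘ₗ c))
    let A₂ : W →ₗ[ℝ] W :=
      ((2 * Complex.I) • (ε₂.restrictScalars ℝ))
        - ((2 * Complex.I) • (c ∘ₗ (ε₂.restrictScalars ℝ) ∘ₗ c))
    -- [J₁, A₂] + [A₁, J₂] = 0  ↔  ε₂⁽¹⁾ = ε₁⁽¹⁾ and ε₂⁽³⁾ = conj(ε₁⁽³⁾)
    ((J₁.restrictScalars ℝ ∘ₗ A₂ - A₂ ∘ₗ J₁.restrictScalars ℝ)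
      + (A₁ ∘ₗ J₂.restrictScalars ℝ - J₂.restrictScalars ℝ ∘ₗ A₁) = 0)
    ↔ ((∀ w ∈ Lp, Ppc (ε₂ w) = Ppc (ε₁ w)) ∧
       (∀ w ∈ Lmc, Pm (ε₂ w) = c (Pmc (ε₁ (c w))))) :=
  stmt_19_general J₁ J₂ Lp Lm Lpc Lmc hLp hLm hLpc hLmc Pp Pm Ppc Pmc hP_sum hPp_mem hPm_mem
    hPpc_mem hPmc_mem hPp_id hPm_id hPpc_id hPmc_id hPp_ann hPm_ann hPpc_ann hPmc_ann c hc_invol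
    hc_antilin hc_Lp hc_Lpc hc_Lm hc_Lmc ε₁ ε₂ hε₁_ran hε₁_van hε₂_ran hε₂_van
end
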